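/- For every integer n ≥ 1 and all t ∈ ℝ, the polynomials A_n satisfy the recurrence t²·A_n''(t) + t·A_n'(t) − n²·A_n(t) = t²·A_{n−2}''(t) + t·A_{n−2}'(t). -/

import Mathlib

/-- The polynomial `A_n(t) = ((−1)^n/n!) ∑_{k=0}^{⌊n/2⌋} (−1)^k C(n,k) (k − n/2)^n t^{n−2k}`,
with the convention `A_0 ≡ 0` (negative indices are handled by truncated subtraction,
which is harmless since `A_0 ≡ 0`). -/
noncomputable def A (n : ℕ) (t : ℝ) : ℝ :=
  if n = 0 then 0 else
    ((-1 : ℝ) ^ n / Nat.factorial n) *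
      ∑ k ∈ Finset.range (n / 2 + 1),
        (-1 : ℝ) ^ k * (Nat.choose n k) * ((k : ℝ) - n / 2) ^ n * t ^ (n - 2 * k)

/-!
With `θ = t d/dt`, the left side is `θ² A_n − n² A_n` and the right side is `θ² A_{n−2}`.
Since `θ² t^m = m² t^m`, both sides are sums of the monomials `t^{n−2k}` with coefficients
multiples of the coefficients `c_{n,k}` of `A_n`. On the left the term `k = 0` cancels, and
comparing the coefficients of `t^{m−2j}` for `n = m + 2`, `k = j + 1` leaves
`c_{m+2,j+1} ((m−2j)² − (m+2)²) = c_{m,j} (m−2j)²`. The bases `k − n/2` of the two sides agree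
and `(m−2j)² − (m+2)² = −4(j+1)(m+1−j)`, so this is the binomial identity
`(j+1)(m+1−j) C(m+2,j+1) = (m+2)(m+1) C(m,j)`.
-/

open Finset

section EulerOperator

variable {𝕜 : Type*} [NontriviallyNormedField 𝕜] {ι : Type*}

noncomputable def eulerSq (f : 𝕜 → 𝕜) (x : 𝕜) : 𝕜 :=
  x ^ 2 * deriv (deriv f) x + x * deriv f x

theorem deriv_sum_mul_pow (s : Finset ι) (a : ι → 𝕜) (m : ι → ℕ) :
    deriv (fun x => ∑ i ∈ s, a i * x ^ m i) =
      fun x => ∑ i ∈ s, a i * m i * x ^ (m i - 1) := by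
  funext x
  exact (HasDerivAt.fun_sum fun i _ => by
    simpa [mul_assoc] using (hasDerivAt_pow (m i) x).const_mul (a i)).deriv

theorem eulerSq_sum_mul_pow (s : Finset ι) (a : ι → 𝕜) (m : ι → ℕ) (x : 𝕜) :
    eulerSq (fun x => ∑ i ∈ s, a i * x ^ m i) x = ∑ i ∈ s, a i * (m i : 𝕜) ^ 2 * x ^ m i := by
  have eulerSq_pow (b : 𝕜) (p : ℕ) :
      x ^ 2 * (b * p * (p - 1 : ℕ) * x ^ (p - 1 - 1)) + x * (b * p * x ^ (p - 1)) =
        b * (p : 𝕜) ^ 2 * x ^ p := by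
    rcases p with _ | _ | p
    · simp
    · simp [mul_comm]
    · simp only [Nat.add_sub_cancel]
      push_cast
      ring
  rw [eulerSq, deriv_sum_mul_pow, deriv_sum_mul_pow s (fun i => a i * m i) (fun i => m i - 1),
    mul_sum, mul_sum, ← sum_add_distrib]
  exact sum_congr rfl fun i _ => eulerSq_pow (a i) (m i)

end EulerOperator

noncomputable def coeffA (n k : ℕ) : ℝ :=
  (-1 : ℝ) ^ n / n.factorial * ((-1 : ℝ) ^ k * n.choose k * ((k : ℝ) - n / 2) ^ n)

theorem A_eq_sum {n : ℕ} (hn : n ≠ 0) :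
    A n = fun t => ∑ k ∈ range (n / 2 + 1), coeffA n k * t ^ (n - 2 * k) := by
  funext t
  simp only [A, if_neg hn, mul_sum]
  exact sum_congr rfl fun k _ => by rw [coeffA]; ring

theorem eulerSq_A (n : ℕ) (t : ℝ) :
    eulerSq (A n) t =
      ∑ k ∈ range (n / 2 + 1), coeffA n k * ((n - 2 * k : ℕ) : ℝ) ^ 2 * t ^ (n - 2 * k) := by
  rcases eq_or_ne n 0 with rfl | hn
  · simp [eulerSq, show A 0 = 0 from funext fun _ => if_pos rfl]
  · rw [A_eq_sum hn]
    exact eulerSq_sum_mul_pow _ _ _ t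

theorem Nat.add_one_mul_add_one_sub_mul_choose (m j : ℕ) :
    (j + 1) * (m + 1 - j) * (m + 2).choose (j + 1) = (m + 2) * (m + 1) * m.choose j := by
  calc (j + 1) * (m + 1 - j) * (m + 2).choose (j + 1)
      = (m + 1 - j) * ((m + 2).choose (j + 1) * (j + 1)) := by ring
    _ = (m + 2) * ((m + 1).choose j * (m + 1 - j)) := by
        rw [← Nat.add_one_mul_choose_eq]; ring
    _ = (m + 2) * (m + 1) * m.choose j := by
        rw [← Nat.choose_mul_succ_eq]; ring

theorem coeffA_add_two_succ {m j : ℕ} (hj : j ≤ m + 1) :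
    coeffA (m + 2) (j + 1) * (((m : ℝ) - 2 * j) ^ 2 - ((m : ℝ) + 2) ^ 2) =
      coeffA m j * ((m : ℝ) - 2 * j) ^ 2 := by
  have hchoose : ((j : ℝ) + 1) * ((m : ℝ) + 1 - j) * (m + 2).choose (j + 1) =
      ((m : ℝ) + 2) * ((m : ℝ) + 1) * m.choose j := by
    have := congrArg (Nat.cast (R := ℝ)) (Nat.add_one_mul_add_one_sub_mul_choose m j)
    push_cast [Nat.cast_sub hj] at this
    exact this
  have hfact : ((m + 2).factorial : ℝ) = ((m : ℝ) + 2) * ((m : ℝ) + 1) * m.factorial := by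
    push_cast [Nat.factorial_succ]; ring
  have hbase : ((j + 1 : ℕ) : ℝ) - ((m + 2 : ℕ) : ℝ) / 2 = (j : ℝ) - m / 2 := by push_cast; ring
  simp only [coeffA, hbase, hfact]
  rw [pow_add ((j : ℝ) - m / 2) m 2, pow_succ (-1 : ℝ) j,
    show ((j : ℝ) - m / 2) ^ 2 = ((m : ℝ) - 2 * j) ^ 2 / 4 by ring]
  have : (m.factorial : ℝ) ≠ 0 := by positivity
  generalize ((j : ℝ) - m / 2) ^ m = P
  field_simp
  linear_combination (4 * (-1) ^ m * P * ((m : ℝ) - 2 * j) ^ 2) * hchoose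

theorem A_recurrence_general (n : ℕ) (t : ℝ) :
    t ^ 2 * deriv (deriv (A n)) t + t * deriv (A n) t - (n : ℝ) ^ 2 * A n t =
      t ^ 2 * deriv (deriv (A (n - 2))) t + t * deriv (A (n - 2)) t := by
  change eulerSq (A n) t - _ = eulerSq (A (n - 2)) t
  obtain rfl | rfl | ⟨m, rfl⟩ : n = 0 ∨ n = 1 ∨ ∃ m, n = m + 2 := by
    rcases n with _ | _ | m <;> simp
  · simp
  · rw [eulerSq_A, eulerSq_A, A_eq_sum one_ne_zero]
    simp
  rw [eulerSq_A, eulerSq_A, A_eq_sum (by omega), mul_sum, ← sum_sub_distrib,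
    show (m + 2) / 2 + 1 = m / 2 + 1 + 1 by omega, sum_range_succ', Nat.add_sub_cancel]
  refine (add_eq_left.mpr (by rw [Nat.mul_zero, Nat.sub_zero]; ring)).trans
    (sum_congr rfl fun j hj => ?_)
  have hjm : 2 * j ≤ m := by have := mem_range.mp hj; omega
  rw [show m + 2 - 2 * (j + 1) = m - 2 * j by omega, Nat.cast_sub hjm]
  push_cast
  linear_combination t ^ (m - 2 * j) * coeffA_add_two_succ (m := m) (j := j) (by omega)

/-- For every `n ≥ 1`, `t² A_n'' + t A_n' − n² A_n = t² A_{n−2}'' + t A_{n−2}'`. -/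
theorem A_recurrence (n : ℕ) (hn : 1 ≤ n) (t : ℝ) :
    t ^ 2 * deriv (deriv (A n)) t + t * deriv (A n) t - (n : ℝ) ^ 2 * A n t =
      t ^ 2 * deriv (deriv (A (n - 2))) t + t * deriv (A (n - 2)) t :=
  A_recurrence_general n t
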